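/- For m ≥ 7, each connected component of the outer subgraph of the strip knight's graph S_m induced on columns {0,1,m-2,m-1} is an infinite path in which every vertex has degree 2, and the second coordinates of the vertices in any single component all have the same parity; there are exactly 8 components (4 among columns {0,1} and 4 among columns {m-2,m-1}). -/

import Mathlib

/-- The knight's move graph on `ℤ × ℤ`. -/
def knightGraph : SimpleGraph (ℤ × ℤ) where
  Adj p q := (|p.1 - q.1| = 1 ∧ |p.2 - q.2| = 2) ∨ (|p.1 - q.1| = 2 ∧ |p.2 - q.2| = 1)
  symm := by
    refine ⟨?_⟩
    intro p q h
    rcases h with ⟨h1, h2⟩ | ⟨h1, h2⟩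
    · exact Or.inl ⟨by rw [abs_sub_comm]; exact h1, by rw [abs_sub_comm]; exact h2⟩
    · exact Or.inr ⟨by rw [abs_sub_comm]; exact h1, by rw [abs_sub_comm]; exact h2⟩
  loopless := by
    refine ⟨?_⟩
    intro p h
    rcases h with ⟨h1, _⟩ | ⟨h1, _⟩ <;> simp at h1

def stripF (m : ℕ) (i : Fin 8) (k : ℤ) : ℤ × ℤ :=
  ((if i.val < 4 then 0 else (m : ℤ) - 2) + k % 2,
   2 * k + (if i.val < 4 then (i.val : ℤ) else (i.val : ℤ) - 4))

lemma knight_adj_iff (p q : ℤ × ℤ) :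
    knightGraph.Adj p q ↔
      ((|p.1 - q.1| = 1 ∧ |p.2 - q.2| = 2) ∨ (|p.1 - q.1| = 2 ∧ |p.2 - q.2| = 1)) := Iff.rfl

/-- For `m ≥ 7`, the outer subgraph of the strip knight's graph `S_m` induced on columns
`{0, 1, m-2, m-1}` consists of exactly 8 connected components, each an infinite path in
which every vertex has degree 2; the second coordinates in any single component all have
the same parity, and 4 components lie in columns `{0,1}` while 4 lie in `{m-2,m-1}`. -/
theorem strip_outer_graph_components (m : ℕ) (hm : 7 ≤ m) :
    ∃ f : Fin 8 → ℤ → ℤ × ℤ,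
      (∀ i k, (f i k).1 = 0 ∨ (f i k).1 = 1 ∨ (f i k).1 = (m : ℤ) - 2 ∨
        (f i k).1 = (m : ℤ) - 1) ∧
      (∀ i k j l, f i k = f j l → i = j ∧ k = l) ∧
      (∀ p : ℤ × ℤ,
        (p.1 = 0 ∨ p.1 = 1 ∨ p.1 = (m : ℤ) - 2 ∨ p.1 = (m : ℤ) - 1) → ∃ i k, f i k = p) ∧
      (∀ i k, knightGraph.Adj (f i k) (f i (k + 1))) ∧
      (∀ i k j l, knightGraph.Adj (f i k) (f j l) → i = j ∧ (l = k + 1 ∨ l = k - 1)) ∧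
      (∀ i k l, (f i k).2 % 2 = (f i l).2 % 2) ∧
      (∀ i : Fin 8,
        (i.val < 4 → ∀ k, (f i k).1 = 0 ∨ (f i k).1 = 1) ∧
        (4 ≤ i.val → ∀ k, (f i k).1 = (m : ℤ) - 2 ∨ (f i k).1 = (m : ℤ) - 1)) := by
  have hm' : (7 : ℤ) ≤ (m : ℤ) := by exact_mod_cast hm
  refine ⟨stripF m, ?_, ?_, ?_, ?_, ?_, ?_, ?_⟩
  · intro i k
    by_cases hi : i.val < 4 <;> simp only [stripF, hi, if_true, if_false] <;> omega
  · intro i k j l h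
    have h1 := congrArg Prod.fst h
    have h2 := congrArg Prod.snd h
    simp only [stripF] at h1 h2
    have hij : i.val = j.val ∧ k = l := by
      have hi8 := i.isLt; have hj8 := j.isLt
      by_cases hi : i.val < 4 <;> by_cases hj : j.val < 4 <;>
        simp only [hi, hj, if_true, if_false] at h1 h2 <;> omega
    exact ⟨Fin.ext hij.1, hij.2⟩
  · rintro ⟨a, b⟩ h
    simp only at h
    have hcase : (a = 0 ∨ a = 1) ∨ (a = (m : ℤ) - 2 ∨ a = (m : ℤ) - 1) := by omega
    rcases hcase with h' | h'
    · set r : ℤ := (b - 2 * a) % 4 with hr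
      have hr4 : 0 ≤ r ∧ r < 4 := by constructor <;> omega
      refine ⟨⟨r.toNat, by omega⟩, (b - r) / 2, ?_⟩
      have hlt : r.toNat < 4 := by omega
      have hcast : ((r.toNat : ℕ) : ℤ) = r := Int.toNat_of_nonneg hr4.1
      simp only [stripF, hlt, if_true, hcast, Prod.mk.injEq]
      constructor <;> omega
    · set r : ℤ := (b - 2 * (a - ((m : ℤ) - 2))) % 4 with hr
      have hr4 : 0 ≤ r ∧ r < 4 := by constructor <;> omega
      refine ⟨⟨4 + r.toNat, by omega⟩, (b - r) / 2, ?_⟩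
      have hlt : ¬ (4 + r.toNat < 4) := by omega
      have hcast : ((r.toNat : ℕ) : ℤ) = r := Int.toNat_of_nonneg hr4.1
      simp only [stripF, hlt, if_false, Prod.mk.injEq]
      push_cast
      constructor <;> omega
  · intro i k
    rw [knight_adj_iff]
    left
    simp only [stripF]
    constructor
    · rw [abs_eq (by norm_num : (0:ℤ) ≤ 1)]; omega
    · rw [abs_eq (by norm_num : (0:ℤ) ≤ 2)]; omega
  · intro i k j l h
    rw [knight_adj_iff] at h
    simp only [stripF] at h
    rw [abs_eq (by norm_num : (0:ℤ) ≤ 1), abs_eq (by norm_num : (0:ℤ) ≤ 2)] at h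
    rw [abs_eq (by norm_num : (0:ℤ) ≤ 2), abs_eq (by norm_num : (0:ℤ) ≤ 1)] at h
    have hij : i.val = j.val ∧ (l = k + 1 ∨ l = k - 1) := by
      have hi8 := i.isLt; have hj8 := j.isLt
      by_cases hi : i.val < 4 <;> by_cases hj : j.val < 4 <;>
        simp only [hi, hj, if_true, if_false] at h <;> omega
    exact ⟨Fin.ext hij.1, hij.2⟩
  · intro i k l
    simp only [stripF]
    omega
  · intro i
    constructor
    · intro hi k
      simp only [stripF, hi, if_true]
      omega
    · intro hi k
      have hi' : ¬ i.val < 4 := by omega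
      simp only [stripF, hi', if_false]
      omega
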